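/- Let ρ_d > 0, b ∈ ℝ, let α : ℝ → (0, ∞) and ω : ℝ → (0, ∞) be continuous, and let (A*, Ω*) be a C¹ solution of the Approximation 4 system for t > 0. Then for all t > 1/ρ_d, the total proliferating population Ω̄(t) = ∫₀¹ Ω*(x,t) dx satisfies the delay differential equation dΩ̄/dt = ω(Ω̄(t))·A*(t) − exp( b/ρ_d − C(t) )·ω(Ω̄(t − 1/ρ_d))·A*(t − 1/ρ_d) + (b − α(A*(t)))·Ω̄(t), where C(t) = ∫_{t − 1/ρ_d}^{t} α(A*(u)) du; moreover dC/dt = α(A*(t)) − α(A*(t − 1/ρ_d)). -/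

import Mathlib

open Real Set

/-- `(A, Ω)` is a C¹ solution of the Approximation 4 system for `t > 0`:
`dA/dt = −ω(Ω̄(t)) A(t) + α(A(t)) Ω̄(t)`;
`∂Ω/∂t + ρ ∂Ω/∂x = (b − α(A(t))) Ω(x,t)` for `x ∈ [0,1]`;
`Ω(0,t) = ω(Ω̄(t)) A(t) / ρ`, where `Ω̄(t) = ∫₀¹ Ω(x,t) dx`.
Here `Ωt` and `Ωx` are the (continuous) partial derivatives of `Ω`. -/
def IsApprox4Solution (ρ b : ℝ) (α ω : ℝ → ℝ) (A : ℝ → ℝ)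
    (Ω Ωt Ωx : ℝ → ℝ → ℝ) : Prop :=
  (∀ t ∈ Set.Ioi (0 : ℝ),
    HasDerivAt A
      (-(ω (∫ x in (0 : ℝ)..1, Ω x t)) * A t +
        α (A t) * ∫ x in (0 : ℝ)..1, Ω x t) t) ∧
  (∀ t ∈ Set.Ioi (0 : ℝ), ∀ x ∈ Set.Icc (0 : ℝ) 1,
    HasDerivAt (fun s => Ω x s) (Ωt x t) t ∧
    HasDerivWithinAt (fun y => Ω y t) (Ωx x t) (Set.Icc 0 1) x ∧
    Ωt x t + ρ * Ωx x t = (b - α (A t)) * Ω x t) ∧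
  (∀ t ∈ Set.Ioi (0 : ℝ),
    Ω 0 t = ω (∫ x in (0 : ℝ)..1, Ω x t) * A t / ρ) ∧
  ContinuousOn (fun p : ℝ × ℝ => Ω p.1 p.2) (Set.Icc 0 1 ×ˢ Set.Ioi 0) ∧
  ContinuousOn (fun p : ℝ × ℝ => Ωt p.1 p.2) (Set.Icc 0 1 ×ˢ Set.Ioi 0) ∧
  ContinuousOn (fun p : ℝ × ℝ => Ωx p.1 p.2) (Set.Icc 0 1 ×ˢ Set.Ioi 0)

/-!
Integrating the transport equation over `x ∈ [0, 1]` gives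
`dΩ̄/dt = (b − α(A t)) Ω̄ t − ρ (Ω(1, t) − Ω(0, t))`. The inflow `Ω(0, t)` is the boundary
condition. For the outflow, follow the characteristic `x = ρ (u − t + 1/ρ)` back to `x = 0` at
time `t − 1/ρ`: along it `Ω` solves the linear ODE `dΩ/du = (b − α(A u)) Ω`, hence
`Ω(1, t) = Ω(0, t − 1/ρ) · exp (b/ρ − C(t))`. The formula for `dC/dt` is the fundamental
theorem of calculus at both endpoints.
-/

open MeasureTheory Topology Filter

theorem hasDerivAt_integral_sub_const_self {f : ℝ → ℝ} {U : Set ℝ} (hU : IsOpen U)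
    (hf : ContinuousOn f U) {h t : ℝ} (ht : uIcc (t - h) t ⊆ U) :
    HasDerivAt (fun s => ∫ u in (s - h)..s, f u) (f t - f (t - h)) t := by
  have hl : t - h ∈ U := ht left_mem_uIcc
  have hr : t ∈ U := ht right_mem_uIcc
  have hint := intervalIntegral.integral_hasFDerivAt ((hf.mono ht).intervalIntegrable)
    (hf.stronglyMeasurableAtFilter hU _ hl) (hf.stronglyMeasurableAtFilter hU _ hr)
    (hf.continuousAt (hU.mem_nhds hl)) (hf.continuousAt (hU.mem_nhds hr))
  have hγ : HasDerivAt (fun s : ℝ => (s - h, s)) (1, 1) t :=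
    ((hasDerivAt_id t).sub_const h).prodMk (hasDerivAt_id t)
  exact (hint.comp_hasDerivAt_of_eq t hγ rfl).congr_deriv (by simp)

theorem hasDerivAt_integral_of_continuousOn {f : ℝ → ℝ} {U : Set ℝ} (hU : IsOpen U)
    (hf : ContinuousOn f U) {a t : ℝ} (ht : uIcc a t ⊆ U) :
    HasDerivAt (fun u => ∫ x in a..u, f x) (f t) t :=
  have hr : t ∈ U := ht right_mem_uIcc
  intervalIntegral.integral_hasDerivAt_right ((hf.mono ht).intervalIntegrable)
    (hf.stronglyMeasurableAtFilter hU _ hr) (hf.continuousAt (hU.mem_nhds hr))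

theorem hasDerivAt_intervalIntegral_of_continuousOn_prod {F F' : ℝ → ℝ → ℝ} {a b t : ℝ}
    {U : Set ℝ} (hab : a ≤ b) (hU : IsOpen U) (ht : t ∈ U)
    (hF : ContinuousOn (fun p : ℝ × ℝ => F p.1 p.2) (Icc a b ×ˢ U))
    (hF' : ContinuousOn (fun p : ℝ × ℝ => F' p.1 p.2) (Icc a b ×ˢ U))
    (hderiv : ∀ x ∈ Icc a b, ∀ s ∈ U, HasDerivAt (F x) (F' x s) s) :
    HasDerivAt (fun s => ∫ x in a..b, F x s) (∫ x in a..b, F' x t) t := by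
  obtain ⟨ε, hε, hball⟩ := Metric.nhds_basis_closedBall.mem_iff.1 (hU.mem_nhds ht)
  obtain ⟨M, hM⟩ := (isCompact_Icc.prod (isCompact_closedBall t ε)).exists_bound_of_continuousOn
    (hF'.mono (prod_mono subset_rfl hball))
  have hIoc : uIoc a b ⊆ Icc a b := by rw [uIoc_of_le hab]; exact Ioc_subset_Icc_self
  have hslice : ∀ {G : ℝ → ℝ → ℝ}, ContinuousOn (fun p : ℝ × ℝ => G p.1 p.2) (Icc a b ×ˢ U) →
      ∀ s ∈ U, AEStronglyMeasurable (fun x => G x s) (volume.restrict (uIoc a b)) :=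
    fun hG s hs => ((hG.uncurry_right s hs).mono hIoc).aestronglyMeasurable measurableSet_uIoc
  refine (intervalIntegral.hasDerivAt_integral_of_dominated_loc_of_deriv_le
    (F := fun s x => F x s) (F' := fun s x => F' x s) (bound := fun _ => M)
    (Metric.ball_mem_nhds t hε) ?_ ?_ (hslice hF' t ht) ?_ intervalIntegrable_const ?_).2
  · filter_upwards [hU.mem_nhds ht] with s hs using hslice hF s hs
  · exact ((hF.uncurry_right t ht).mono (by rw [uIcc_of_le hab])).intervalIntegrable
  · exact Eventually.of_forall fun x hx s hs =>
      hM (x, s) ⟨hIoc hx, Metric.ball_subset_closedBall hs⟩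
  · exact Eventually.of_forall fun x hx s hs =>
      hderiv x (hIoc hx) s (hball (Metric.ball_subset_closedBall hs))

theorem hasDerivAt_comp_of_partials {F Fx Ft : ℝ → ℝ → ℝ} {U : Set (ℝ × ℝ)} (hU : IsOpen U)
    (hFx : ∀ p ∈ U, HasDerivAt (fun x => F x p.2) (Fx p.1 p.2) p.1)
    (hFt : ∀ p ∈ U, HasDerivAt (fun s => F p.1 s) (Ft p.1 p.2) p.2)
    (hFx_cont : ContinuousOn (fun p : ℝ × ℝ => Fx p.1 p.2) U)
    (hFt_cont : ContinuousOn (fun p : ℝ × ℝ => Ft p.1 p.2) U)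
    {γ : ℝ → ℝ} {γ' s : ℝ} (hγ : HasDerivAt γ γ' s) (hs : (γ s, s) ∈ U) :
    HasDerivAt (fun u => F (γ u) u) (Fx (γ s) s * γ' + Ft (γ s) s) s := by
  have hU' : U ∈ 𝓝 (γ s, s) := hU.mem_nhds hs
  have hsmul : Continuous fun c : ℝ => (1 : ℝ →L[ℝ] ℝ).smulRight c :=
    (ContinuousLinearMap.smulRightL ℝ ℝ ℝ 1).continuous
  have hF := hasStrictFDerivAt_uncurry_coprod (𝕜 := ℝ) (u := (γ s, s)) (f := F)
    (f₁ := fun x s => (1 : ℝ →L[ℝ] ℝ).smulRight (Fx x s))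
    (f₂ := fun x s => (1 : ℝ →L[ℝ] ℝ).smulRight (Ft x s))
    (by filter_upwards [hU'] with p hp using (hFx p hp).hasFDerivAt)
    (by filter_upwards [hU'] with p hp using (hFt p hp).hasFDerivAt)
    (hsmul.continuousAt.comp (hFx_cont.continuousAt hU'))
    (hsmul.continuousAt.comp (hFt_cont.continuousAt hU'))
  exact (hF.hasFDerivAt.comp_hasDerivAt_of_eq s (hγ.prodMk (hasDerivAt_id s)) rfl).congr_deriv
    (by simp [Function.HasUncurry.uncurry, mul_comm])

theorem eq_mul_exp_sub_of_hasDerivAt {g Φ φ : ℝ → ℝ} {a c : ℝ} (hac : a ≤ c)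
    (hg : ContinuousOn g (Icc a c)) (hΦ : ContinuousOn Φ (Icc a c))
    (hg' : ∀ u ∈ Ioo a c, HasDerivAt g (φ u * g u) u)
    (hΦ' : ∀ u ∈ Ioo a c, HasDerivAt Φ (φ u) u) :
    g c = g a * exp (Φ c - Φ a) := by
  have hconst : g c * exp (-Φ c) = g a * exp (-Φ a) := by
    rcases hac.eq_or_lt with rfl | hlt
    · rfl
    obtain ⟨u, hu, hslope⟩ := exists_hasDerivAt_eq_slope (fun u => g u * exp (-Φ u))
      (fun _ => 0) hlt (hg.mul (hΦ.neg.rexp))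
      (fun u hu => ((hg' u hu).mul (hΦ' u hu).neg.exp).congr_deriv (by ring))
    rw [eq_comm, div_eq_zero_iff, sub_eq_zero] at hslope
    exact hslope.resolve_right (sub_ne_zero.2 hlt.ne')
  calc g c = g c * exp (-Φ c) * exp (Φ c) := by rw [mul_assoc, ← exp_add]; simp
    _ = g a * exp (Φ c - Φ a) := by rw [hconst, mul_assoc, ← exp_add]; ring_nf

namespace IsApprox4Solution

variable {ρ b : ℝ} {α ω A : ℝ → ℝ} {Ω Ωt Ωx : ℝ → ℝ → ℝ}

theorem continuousOn_α_comp (hsol : IsApprox4Solution ρ b α ω A Ω Ωt Ωx) (hα : Continuous α) :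
    ContinuousOn (fun u => α (A u)) (Ioi 0) := fun u hu =>
  hα.continuousAt.comp_continuousWithinAt (hsol.1 u hu).continuousAt.continuousWithinAt

theorem integral_Ωx_eq_sub (hsol : IsApprox4Solution ρ b α ω A Ω Ωt Ωx) {t : ℝ} (ht : 0 < t) :
    ∫ x in (0 : ℝ)..1, Ωx x t = Ω 1 t - Ω 0 t :=
  intervalIntegral.integral_eq_sub_of_hasDerivAt_of_le zero_le_one
    (hsol.2.2.2.1.uncurry_right t ht)
    (fun x hx => (hsol.2.1 t ht x (Ioo_subset_Icc_self hx)).2.1.hasDerivAt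
      (Icc_mem_nhds hx.1 hx.2))
    ((hsol.2.2.2.2.2.uncurry_right t ht).intervalIntegrable_of_Icc zero_le_one)

theorem hasDerivAt_integral (hsol : IsApprox4Solution ρ b α ω A Ω Ωt Ωx) {t : ℝ} (ht : 0 < t) :
    HasDerivAt (fun s => ∫ x in (0 : ℝ)..1, Ω x s)
      ((b - α (A t)) * (∫ x in (0 : ℝ)..1, Ω x t) - ρ * (Ω 1 t - Ω 0 t)) t := by
  have hFTC := hsol.integral_Ωx_eq_sub ht
  obtain ⟨-, hPDE, -, hΩ, hΩt, hΩx⟩ := hsol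
  have hderiv := hasDerivAt_intervalIntegral_of_continuousOn_prod zero_le_one isOpen_Ioi ht
    hΩ hΩt (fun x hx s hs => (hPDE s hs x hx).1)
  have hΩt_eq : ∫ x in (0 : ℝ)..1, Ωt x t =
      ∫ x in (0 : ℝ)..1, ((b - α (A t)) * Ω x t - ρ * Ωx x t) := by
    refine intervalIntegral.integral_congr fun x hx => ?_
    rw [uIcc_of_le zero_le_one] at hx
    linarith [(hPDE t ht x hx).2.2]
  rw [hΩt_eq, intervalIntegral.integral_sub, intervalIntegral.integral_const_mul,
    intervalIntegral.integral_const_mul, hFTC] at hderiv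
  · exact hderiv
  · exact ((hΩ.uncurry_right t ht).intervalIntegrable_of_Icc zero_le_one).const_mul _
  · exact ((hΩx.uncurry_right t ht).intervalIntegrable_of_Icc zero_le_one).const_mul _

theorem hasDerivAt_along_characteristic (hsol : IsApprox4Solution ρ b α ω A Ω Ωt Ωx)
    {t₀ s : ℝ} (hs : 0 < s) (hx : ρ * (s - t₀) ∈ Ioo 0 1) :
    HasDerivAt (fun u => Ω (ρ * (u - t₀)) u) ((b - α (A s)) * Ω (ρ * (s - t₀)) s) s := by
  obtain ⟨-, hPDE, -, -, hΩt, hΩx⟩ := hsol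
  have hU : Ioo (0 : ℝ) 1 ×ˢ Ioi (0 : ℝ) ⊆ Icc 0 1 ×ˢ Ioi 0 :=
    prod_mono Ioo_subset_Icc_self subset_rfl
  have hγ : HasDerivAt (fun u => ρ * (u - t₀)) ρ s := by
    simpa using ((hasDerivAt_id s).sub_const t₀).const_mul ρ
  refine (hasDerivAt_comp_of_partials (isOpen_Ioo.prod isOpen_Ioi)
    (fun p hp => (hPDE p.2 hp.2 p.1 (hU hp).1).2.1.hasDerivAt (Icc_mem_nhds hp.1.1 hp.1.2))
    (fun p hp => (hPDE p.2 hp.2 p.1 (hU hp).1).1)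
    (hΩx.mono hU) (hΩt.mono hU) hγ ⟨hx, hs⟩).congr_deriv ?_
  linarith [(hPDE s hs _ (Ioo_subset_Icc_self hx)).2.2]

theorem right_boundary_eq (hsol : IsApprox4Solution ρ b α ω A Ω Ωt Ωx) (hρ : 0 < ρ)
    (hα : Continuous α) {t : ℝ} (ht : 1 / ρ < t) :
    Ω 1 t = Ω 0 (t - 1 / ρ) * exp (b / ρ - ∫ u in (t - 1 / ρ)..t, α (A u)) := by
  set t₀ := t - 1 / ρ with ht₀_def
  have ht₀ : 0 < t₀ := by linarith
  have hρt : ρ * (t - t₀) = 1 := by rw [ht₀_def]; field_simp; ring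
  have hmem : ∀ u ∈ Icc t₀ t, ρ * (u - t₀) ∈ Icc (0 : ℝ) 1 := fun u hu =>
    ⟨by nlinarith [hu.1], by nlinarith [hu.2]⟩
  have hmem' : ∀ u ∈ Ioo t₀ t, ρ * (u - t₀) ∈ Ioo (0 : ℝ) 1 := fun u hu =>
    ⟨by nlinarith [hu.1], by nlinarith [hu.2]⟩
  have hΦ : ∀ u, 0 < u →
      HasDerivAt (fun u => b * u - ∫ v in t₀..u, α (A v)) (b - α (A u)) u := by
    intro u hu
    exact (((hasDerivAt_id' u).const_mul b).sub
      (hasDerivAt_integral_of_continuousOn isOpen_Ioi (hsol.continuousOn_α_comp hα)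
        (ordConnected_Ioi.uIcc_subset ht₀ hu))).congr_deriv (by ring)
  -- The characteristic meets the lines `x = 0`, `x = 1` only at its ends, where continuity suffices.
  have key := eq_mul_exp_sub_of_hasDerivAt (g := fun u => Ω (ρ * (u - t₀)) u)
    (by linarith [show 0 < 1 / ρ by positivity])
    (hsol.2.2.2.1.comp (f := fun u => (ρ * (u - t₀), u)) (by fun_prop)
      fun u hu => ⟨hmem u hu, ht₀.trans_le hu.1⟩)
    (fun u hu => (hΦ u (ht₀.trans_le hu.1)).continuousAt.continuousWithinAt)
    (fun u hu => hsol.hasDerivAt_along_characteristic (ht₀.trans hu.1) (hmem' u hu))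
    (fun u hu => hΦ u (ht₀.trans hu.1))
  simp only [hρt, sub_self, mul_zero, intervalIntegral.integral_same] at key
  rw [key]
  congr 2
  rw [ht₀_def]
  field_simp
  ring

end IsApprox4Solution

theorem stmt11_general (ρ b : ℝ) (hρ : 0 < ρ) (α ω : ℝ → ℝ)
    (hαc : Continuous α)
    (A : ℝ → ℝ) (Ω Ωt Ωx : ℝ → ℝ → ℝ)
    (hsol : IsApprox4Solution ρ b α ω A Ω Ωt Ωx) :
    ∀ t : ℝ, 1 / ρ < t →
      HasDerivAt (fun s => ∫ x in (0 : ℝ)..1, Ω x s)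
        (ω (∫ x in (0 : ℝ)..1, Ω x t) * A t -
          Real.exp (b / ρ - ∫ u in (t - 1 / ρ)..t, α (A u)) *
            ω (∫ x in (0 : ℝ)..1, Ω x (t - 1 / ρ)) * A (t - 1 / ρ) +
          (b - α (A t)) * ∫ x in (0 : ℝ)..1, Ω x t) t ∧
      HasDerivAt (fun s => ∫ u in (s - 1 / ρ)..s, α (A u))
        (α (A t) - α (A (t - 1 / ρ))) t := by
  intro t ht
  have ht₀ : 0 < t - 1 / ρ := by linarith [show 0 < 1 / ρ by positivity]
  have ht_pos : 0 < t := by linarith [show 0 < 1 / ρ by positivity]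
  refine ⟨(hsol.hasDerivAt_integral ht_pos).congr_deriv ?_,
    hasDerivAt_integral_sub_const_self isOpen_Ioi (hsol.continuousOn_α_comp hαc)
      (ordConnected_Ioi.uIcc_subset ht₀ ht_pos)⟩
  rw [hsol.right_boundary_eq hρ hαc ht, hsol.2.2.1 t ht_pos, hsol.2.2.1 _ ht₀]
  field_simp
  ring

/-- Let `ρ > 0`, `b ∈ ℝ`, `α, ω : ℝ → (0,∞)` continuous, and let
`(A, Ω)` be a C¹ solution of the Approximation 4 system for `t > 0`.  Then for all
`t > 1/ρ`, the total population `Ω̄(t) = ∫₀¹ Ω(x,t) dx` satisfies the delay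
differential equation
`dΩ̄/dt = ω(Ω̄(t)) A(t) − e^{b/ρ − C(t)} ω(Ω̄(t − 1/ρ)) A(t − 1/ρ) + (b − α(A(t))) Ω̄(t)`
with `C(t) = ∫_{t−1/ρ}^t α(A(u)) du`, and moreover
`dC/dt = α(A(t)) − α(A(t − 1/ρ))`. -/
theorem stmt11 (ρ b : ℝ) (hρ : 0 < ρ) (α ω : ℝ → ℝ)
    (hαc : Continuous α) (hωc : Continuous ω)
    (hαpos : ∀ A : ℝ, 0 < α A) (hωpos : ∀ Ω : ℝ, 0 < ω Ω)
    (A : ℝ → ℝ) (Ω Ωt Ωx : ℝ → ℝ → ℝ)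
    (hsol : IsApprox4Solution ρ b α ω A Ω Ωt Ωx) :
    ∀ t : ℝ, 1 / ρ < t →
      HasDerivAt (fun s => ∫ x in (0 : ℝ)..1, Ω x s)
        (ω (∫ x in (0 : ℝ)..1, Ω x t) * A t -
          Real.exp (b / ρ - ∫ u in (t - 1 / ρ)..t, α (A u)) *
            ω (∫ x in (0 : ℝ)..1, Ω x (t - 1 / ρ)) * A (t - 1 / ρ) +
          (b - α (A t)) * ∫ x in (0 : ℝ)..1, Ω x t) t ∧
      HasDerivAt (fun s => ∫ u in (s - 1 / ρ)..s, α (A u))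
        (α (A t) - α (A (t - 1 / ρ))) t :=
  stmt11_general ρ b hρ α ω hαc A Ω Ωt Ωx hsol
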